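/- arXiv:2206.13653 — 2 statements merged into one kernel-verified Lean document; each statement's English description precedes it below -/
import Mathlib

section
/- Let λ(d) = 0.5 - 4.05/(d+2) and g(d) = 1 + (11.51 + 1.5·log d + log((d - 2.05)/(1 + λ(d)))) / log((d - 2.05)/(1 + λ(d)) - 0.5·d). Then g is strictly monotonically decreasing on [7, ∞) and lim_{d→∞} g(d) = 3.5. -/
open Filter

/-- `λ(d) = 0.5 - 4.05/(d+2)`. -/
noncomputable def lamFun (d : ℝ) : ℝ := 0.5 - 4.05 / (d + 2)

/-- `g(d) = 1 + (11.51 + 1.5·log d + log((d-2.05)/(1+λ(d)))) / log((d-2.05)/(1+λ(d)) - 0.5d)`. -/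
noncomputable def gFun (d : ℝ) : ℝ :=
  1 + (11.51 + 1.5 * Real.log d + Real.log ((d - 2.05) / (1 + lamFun d))) /
        Real.log ((d - 2.05) / (1 + lamFun d) - 0.5 * d)

/-!
Write `A = (d - 2.05) / (1 + λ(d)) = 2d/3 + 13/30 - 2.43/(d - 0.7)` and `B = A - d/2`, so that
`g = 1 + N / log B` with `N = 11.51 + 1.5 log d + log A`, and `A' - 2/3 = B' - 1/6 = 2.43/(d - 0.7)²`.
The sign of `g'` is that of `N' log B - N B'/B`. For `d ≥ 7` one has `N' (d + 3) ≤ 5/2 + 10/d`,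
`6B ≤ d + 3`, `B' ≥ 1/6`, `log B ≤ log d` and `N ≥ 11 + 5/2 log d`; since `log d / d < 1`, the
error term `10 log d / d` is beaten by the constant `11`. For the limit, `A/d → 2/3` and
`B/d → 1/6` give `log A / log d → 1` and `log B / log d → 1`, so `g → 1 + (1.5 + 1) / 1`.
-/

open Real

/-- Partial fractions: `(d - 2.05) / (1 + λ(d)) = (d - 2.05) (d + 2) / (1.5 (d - 0.7))`. -/
noncomputable def aFun (d : ℝ) : ℝ := 2 * d / 3 + 13 / 30 - 2.43 / (d - 0.7)

noncomputable def aDeriv (d : ℝ) : ℝ := 2 / 3 + 2.43 / (d - 0.7) ^ 2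

noncomputable def bFun (d : ℝ) : ℝ := aFun d - d / 2

noncomputable def gNum (d : ℝ) : ℝ := 11.51 + 1.5 * log d + log (aFun d)

noncomputable def gNumDeriv (d : ℝ) : ℝ := 1.5 / d + aDeriv d / aFun d

section

variable {d : ℝ}

lemma div_one_add_lamFun (h2 : d + 2 ≠ 0) (h7 : d ≠ 0.7) :
    (d - 2.05) / (1 + lamFun d) = aFun d := by
  have h7' : d - 0.7 ≠ 0 := sub_ne_zero.2 h7
  have hlam : 1 + lamFun d = 1.5 * (d - 0.7) / (d + 2) := by
    rw [lamFun]; field_simp; ring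
  rw [hlam, aFun]
  field_simp
  ring

lemma div_one_add_lamFun_sub (h2 : d + 2 ≠ 0) (h7 : d ≠ 0.7) :
    (d - 2.05) / (1 + lamFun d) - 0.5 * d = bFun d := by
  rw [div_one_add_lamFun h2 h7, bFun]
  ring

lemma gFun_eq (hd : 0.7 < d) : gFun d = 1 + gNum d / log (bFun d) := by
  have h2 : d + 2 ≠ 0 := by linarith
  rw [gFun, div_one_add_lamFun_sub h2 hd.ne', div_one_add_lamFun h2 hd.ne', gNum]

lemma hasDerivAt_aFun (hd : d ≠ 0.7) : HasDerivAt aFun (aDeriv d) d := by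
  have hd' : d - 0.7 ≠ 0 := sub_ne_zero.2 hd
  have h := ((((hasDerivAt_id' d).const_mul 2).div_const 3).add_const (13 / 30)).fun_sub
    ((hasDerivAt_const d 2.43).div ((hasDerivAt_id' d).sub_const 0.7) hd')
  exact h.congr_deriv (by rw [aDeriv]; ring)

lemma hasDerivAt_bFun (hd : d ≠ 0.7) : HasDerivAt bFun (aDeriv d - 1 / 2) d :=
  ((hasDerivAt_aFun hd).fun_sub ((hasDerivAt_id' d).div_const 2)).congr_deriv (by ring)

lemma hasDerivAt_gNum (hd0 : d ≠ 0) (hd : d ≠ 0.7) (hA : aFun d ≠ 0) :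
    HasDerivAt gNum (gNumDeriv d) d :=
  ((((hasDerivAt_log hd0).const_mul 1.5).const_add 11.51).fun_add
    ((hasDerivAt_aFun hd).log hA)).congr_deriv (by rw [gNumDeriv]; ring)

lemma two_div_three_mul_le_aFun (hd : 7 ≤ d) : 2 / 3 * d ≤ aFun d := by
  have h : 2.43 / (d - 0.7) ≤ 13 / 30 := by
    rw [div_le_iff₀ (by linarith)]; linarith
  rw [aFun]; linarith

lemma six_mul_bFun_le (hd : 0.7 < d) : 6 * bFun d ≤ d + 3 := by
  have h : 0 < 2.43 / (d - 0.7) := div_pos (by norm_num) (by linarith)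
  rw [bFun, aFun]; linarith

lemma one_lt_bFun (hd : 7 ≤ d) : 1 < bFun d := by
  have := two_div_three_mul_le_aFun hd
  rw [bFun]; linarith

lemma two_div_three_le_aDeriv : 2 / 3 ≤ aDeriv d :=
  le_add_of_nonneg_right (by positivity)

lemma aDeriv_le (hd : 7 ≤ d) : aDeriv d ≤ 2 / 3 + 1 / d := by
  rw [aDeriv, add_le_add_iff_left, div_le_div_iff₀ (by nlinarith) (by linarith)]
  nlinarith

lemma gNumDeriv_mul_le (hd : 7 ≤ d) : gNumDeriv d * (d + 3) ≤ 2.5 + 10 / d := by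
  have hd0 : 0 < d := by linarith
  have hP : gNumDeriv d ≤ 1.5 / d + (2 / 3 + 1 / d) / (2 / 3 * d) := by
    rw [gNumDeriv]
    gcongr
    · exact aDeriv_le hd
    · exact two_div_three_mul_le_aFun hd
  calc gNumDeriv d * (d + 3) ≤ (1.5 / d + (2 / 3 + 1 / d) / (2 / 3 * d)) * (d + 3) := by
        gcongr
    _ = 2.5 + 9 / d + 4.5 / d ^ 2 := by field_simp; ring
    _ ≤ 2.5 + 10 / d := by
        have h : 4.5 / d ^ 2 ≤ 1 / d := by
          rw [div_le_div_iff₀ (by positivity) hd0]; nlinarith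
        linarith [show 10 / d = 9 / d + 1 / d by ring]

lemma eleven_add_le_gNum (hd : 7 ≤ d) : 11 + 2.5 * log d ≤ gNum d := by
  have hlogA : log (2 / 3) + log d ≤ log (aFun d) := by
    rw [← log_mul (by norm_num) (by linarith)]
    exact log_le_log (by positivity) (two_div_three_mul_le_aFun hd)
  have hlog23 : 1 - (2 / 3 : ℝ)⁻¹ ≤ log (2 / 3) := one_sub_inv_le_log_of_pos (by norm_num)
  rw [gNum]; norm_num at hlog23; linarith

lemma gNumDeriv_mul_log_bFun_lt (hd : 7 ≤ d) :
    gNumDeriv d * log (bFun d) < gNum d * ((aDeriv d - 1 / 2) / bFun d) := by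
  have hd0 : 0 < d := by linarith
  have hB : 0 < bFun d := one_pos.trans (one_lt_bFun hd)
  have h6B := six_mul_bFun_le (by linarith : 0.7 < d)
  have hQ : 0 < log (bFun d) := log_pos (one_lt_bFun hd)
  have hQL : log (bFun d) ≤ log d := log_le_log hB (by linarith)
  have hLd : log d < d := (log_le_sub_one_of_pos hd0).trans_lt (by linarith)
  have hN := eleven_add_le_gNum hd
  have hN0 : 0 ≤ gNum d := by linarith [log_nonneg (by linarith : (1 : ℝ) ≤ d)]
  have hmain : gNumDeriv d * log (bFun d) * (d + 3) < gNum d := by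
    calc gNumDeriv d * log (bFun d) * (d + 3)
        = gNumDeriv d * (d + 3) * log (bFun d) := by ring
      _ ≤ (2.5 + 10 / d) * log d := by
          gcongr ?_ * ?_
          · exact gNumDeriv_mul_le hd
      _ = 2.5 * log d + 10 * (log d / d) := by ring
      _ < 2.5 * log d + 10 * 1 := by
          gcongr
          exact (div_lt_one hd0).2 hLd
      _ ≤ gNum d := by linarith
  calc gNumDeriv d * log (bFun d) < gNum d / (d + 3) := by
        rwa [lt_div_iff₀ (by linarith)]
    _ ≤ gNum d / (6 * bFun d) := by gcongr
    _ = gNum d * ((2 / 3 - 1 / 2) / bFun d) := by field_simp; ring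
    _ ≤ gNum d * ((aDeriv d - 1 / 2) / bFun d) := by
        gcongr
        exact two_div_three_le_aDeriv

lemma hasDerivAt_gFun (hd : 7 ≤ d) :
    HasDerivAt gFun ((gNumDeriv d * log (bFun d) - gNum d * ((aDeriv d - 1 / 2) / bFun d)) /
      log (bFun d) ^ 2) d := by
  have hB := one_lt_bFun hd
  have h := ((hasDerivAt_gNum (by linarith) (by linarith)
    (by linarith [two_div_three_mul_le_aFun hd])).div
    ((hasDerivAt_bFun (by linarith)).log (by linarith)) (log_pos hB).ne').const_add 1
  refine h.congr_of_eventuallyEq ?_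
  filter_upwards [lt_mem_nhds (by linarith : (0.7 : ℝ) < d)] with y hy using gFun_eq hy

theorem strictAntiOn_gFun : StrictAntiOn gFun (Set.Ici 7) := by
  refine strictAntiOn_of_deriv_neg (convex_Ici 7)
    (fun d hd => (hasDerivAt_gFun hd).continuousAt.continuousWithinAt) fun d hd => ?_
  rw [interior_Ici] at hd
  rw [(hasDerivAt_gFun hd.le).deriv]
  exact div_neg_of_neg_of_pos (sub_neg.2 (gNumDeriv_mul_log_bFun_lt hd.le))
    (pow_pos (log_pos (one_lt_bFun hd.le)) 2)

end

lemma tendsto_log_div_log_of_tendsto_div {f : ℝ → ℝ} {c : ℝ} (hc : 0 < c)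
    (hf : Tendsto (fun x => f x / x) atTop (nhds c)) :
    Tendsto (fun x => log (f x) / log x) atTop (nhds 1) := by
  have h : Tendsto (fun x => 1 + log (f x / x) / log x) atTop (nhds (1 + 0)) :=
    (((continuousAt_log hc.ne').tendsto.comp hf).div_atTop tendsto_log_atTop).const_add 1
  rw [add_zero] at h
  refine h.congr' ?_
  filter_upwards [hf.eventually (lt_mem_nhds hc), eventually_gt_atTop 1] with x hfx hx
  have hx0 : 0 < x := one_pos.trans hx
  have hfx0 : f x ≠ 0 := fun h => by simp [h] at hfx
  rw [log_div hfx0 hx0.ne']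
  field_simp [(log_pos hx).ne']
  ring

lemma tendsto_aFun_div : Tendsto (fun d => aFun d / d) atTop (nhds (2 / 3)) := by
  have h : Tendsto (fun d : ℝ => 2 / 3 + (13 / 30 - 2.43 / (d - 0.7)) / d) atTop
      (nhds (2 / 3 + 0)) :=
    ((tendsto_const_nhds.sub (tendsto_const_nhds.div_atTop
      (tendsto_atTop_add_const_right _ _ tendsto_id))).div_atTop tendsto_id).const_add _
  rw [add_zero] at h
  refine h.congr' ?_
  filter_upwards [eventually_gt_atTop 0] with d hd
  rw [aFun]
  field_simp
  ring

theorem tendsto_gFun : Tendsto gFun atTop (nhds 3.5) := by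
  have hA := tendsto_log_div_log_of_tendsto_div (by norm_num) tendsto_aFun_div
  have hB : Tendsto (fun d => log (bFun d) / log d) atTop (nhds 1) := by
    refine tendsto_log_div_log_of_tendsto_div (c := 2 / 3 - 1 / 2) (by norm_num)
      ((tendsto_aFun_div.sub_const (1 / 2)).congr' ?_)
    filter_upwards [eventually_gt_atTop 0] with d hd
    rw [bFun]; field_simp
  have h : Tendsto (fun d => 1 + (11.51 / log d + 1.5 + log (aFun d) / log d) /
      (log (bFun d) / log d)) atTop (nhds (1 + (0 + 1.5 + 1) / 1)) :=
    (((tendsto_const_nhds.div_atTop tendsto_log_atTop).add_const _).add hA |>.div hB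
      one_ne_zero).const_add 1
  rw [show (3.5 : ℝ) = 1 + (0 + 1.5 + 1) / 1 by norm_num]
  refine h.congr' ?_
  filter_upwards [eventually_ge_atTop 7] with d hd
  rw [gFun_eq (by linarith), gNum]
  field_simp [(log_pos (by linarith : (1 : ℝ) < d)).ne']

/-- the argument of the outer logarithm exceeds `1` on `[7, ∞)` (so `g` is
well-defined), `g` is strictly decreasing on `[7, ∞)`, and `g(d) → 3.5` as `d → ∞`. -/
theorem stmt2 :
    (∀ d : ℝ, 7 ≤ d → 1 < (d - 2.05) / (1 + lamFun d) - 0.5 * d) ∧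
    StrictAntiOn gFun (Set.Ici (7 : ℝ)) ∧
    Tendsto gFun atTop (nhds 3.5) := by
  refine ⟨fun d hd => ?_, strictAntiOn_gFun, tendsto_gFun⟩
  rw [div_one_add_lamFun_sub (by linarith) (by linarith)]
  exact one_lt_bFun hd
end

section
/- Let F ∈ ℤ[x,y] be an irreducible binary form of degree d ≥ 3 with roots α_1, ..., α_d of F(x,1) in an algebraic closure of ℚ. There exists an index j ∈ {1,...,d} and a representation α_j = (v·α_1 - u)/(-t·α_1 + s) with integers s,t,u,v, sv - tu ≠ 0, if and only if the matrix M = |sv-tu|^{-1/2}·(s u; t v) belongs to Aut'|F|. -/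
/-!
Over `ℂ` the form factors as `F(x,y) = c_d ∏ₖ (x - αₖ y)`, hence
`F(sx+uy, tx+vy) = c_d ∏ₖ ((s - tαₖ) x + (u - vαₖ) y)`.

If `α_j` is the Möbius image of `α₁`, then `G(X) = F(sX+u, tX+v) ∈ ℚ[X]` shares the root `α_j`
with the irreducible `F(X,1)`, so it vanishes at every `αₖ`: the Möbius map permutes the roots.
Then `F ∘ M = λ F` with `λ = ∏ₖ (s - tαₖ) = F(s,t)/c_d` real, and comparing
`∏_{k ≠ l} (αₖ - α_l)` before and after the permutation gives `λ^(2(d-1)) = (sv-tu)^(d(d-1))`,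
i.e. `λ = ±|sv-tu|^(d/2)`. Conversely, if `F ∘ M = λ F` with `λ ≠ 0`, then `G`, hence `F(X,1)`,
vanishes at the Möbius image of `α₁`, which is therefore some `α_j`.

Since `F` is homogeneous, whether `F ∘ A = ±|det A|^(d/2) F` holds only depends on the normalized
matrix `|det A|^(-1/2) A`, which makes membership in `Aut'|F|` independent of the chosen `A`.
-/

/-- The binary form `F(x,y) = ∑ cᵢ xⁱ y^(d-i)` evaluated over `ℝ`. -/
noncomputable def binForm (d : ℕ) (c : Fin (d + 1) → ℤ) (x y : ℝ) : ℝ :=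
  ∑ i : Fin (d + 1), (c i : ℝ) * x ^ (i : ℕ) * y ^ (d - (i : ℕ))

/-- The enhanced automorphism group `Aut'|F|` of a degree-`d` binary form `F`. -/
noncomputable def autSetF (d : ℕ) (F : ℝ → ℝ → ℝ) : Set (Matrix (Fin 2) (Fin 2) ℝ) :=
  {M | ∃ s t u v : ℤ, s * v - t * u ≠ 0 ∧
    M = (Real.sqrt |((s * v - t * u : ℤ) : ℝ)|)⁻¹ • !![(s : ℝ), (u : ℝ); (t : ℝ), (v : ℝ)] ∧
    ((∀ x y : ℝ, F ((s : ℝ) * x + (u : ℝ) * y) ((t : ℝ) * x + (v : ℝ) * y) =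
        Real.sqrt |((s * v - t * u : ℤ) : ℝ)| ^ d * F x y) ∨
     (∀ x y : ℝ, F ((s : ℝ) * x + (u : ℝ) * y) ((t : ℝ) * x + (v : ℝ) * y) =
        -(Real.sqrt |((s * v - t * u : ℤ) : ℝ)| ^ d * F x y)))}

open Polynomial Finset

section OffDiagonal

variable {ι M : Type*} [Fintype ι] [DecidableEq ι] [CommMonoid M]

theorem prod_prod_erase_perm (f : ι → ι → M) (π : Equiv.Perm ι) :
    ∏ i, ∏ j ∈ univ.erase i, f (π i) (π j) = ∏ i, ∏ j ∈ univ.erase i, f i j := by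
  refine Fintype.prod_equiv π _ _ fun i => ?_
  exact prod_equiv π (by simp [π.injective.ne_iff]) (by simp)

theorem prod_prod_erase_left (g : ι → M) :
    ∏ i, ∏ _j ∈ univ.erase i, g i = (∏ i, g i) ^ (Fintype.card ι - 1) := by
  simp [prod_const, card_erase_of_mem, prod_pow]

theorem prod_prod_erase_right (g : ι → M) :
    ∏ i, ∏ j ∈ univ.erase i, g j = (∏ i, g i) ^ (Fintype.card ι - 1) := by
  rw [← prod_prod_erase_left]
  exact prod_comm' (by simp [eq_comm])

end OffDiagonal

theorem prod_pow_eq_of_moebius_perm {K : Type*} [Field K] {n : ℕ} {α : Fin n → K}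
    (hα : Function.Injective α) (π : Equiv.Perm (Fin n)) {s t u v : K}
    (h : ∀ i, (s - t * α i) * α (π i) + (u - v * α i) = 0) :
    (∏ i, (s - t * α i)) ^ (2 * (n - 1)) = (s * v - t * u) ^ (n * (n - 1)) := by
  set Δ := ∏ i, ∏ j ∈ univ.erase i, (α i - α j)
  have hΔ : Δ ≠ 0 := prod_ne_zero_iff.mpr fun i _ => prod_ne_zero_iff.mpr fun j hj =>
    sub_ne_zero.mpr (hα.ne (ne_of_mem_erase hj).symm)
  have hpair : ∀ i j, (α (π i) - α (π j)) * ((s - t * α i) * (s - t * α j))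
      = (s * v - t * u) * (α i - α j) := fun i j => by
    linear_combination (s - t * α j) * h i - (s - t * α i) * h j
  refine mul_left_cancel₀ hΔ ?_
  calc Δ * (∏ i, (s - t * α i)) ^ (2 * (n - 1))
      = ∏ i, ∏ j ∈ univ.erase i, ((α (π i) - α (π j)) * ((s - t * α i) * (s - t * α j))) := by
        simp only [prod_mul_distrib, prod_prod_erase_left, prod_prod_erase_right,
          prod_prod_erase_perm (fun i j => α i - α j), Fintype.card_fin, Δ]
        ring
    _ = Δ * (s * v - t * u) ^ (n * (n - 1)) := by
        simp only [hpair, prod_mul_distrib, prod_const, card_erase_of_mem (mem_univ _),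
          card_univ, Fintype.card_fin, ← pow_mul, Δ]
        ring

theorem Irreducible.algebraMap_sub_mul_ne_zero {K L : Type*} [Field K] [Field L] [Algebra K L]
    {f : K[X]} (hf : Irreducible f) (hdeg : f.natDegree ≠ 1) {z : L} (hz : aeval z f = 0)
    {a b : K} (hab : a ≠ 0 ∨ b ≠ 0) : algebraMap K L a - algebraMap K L b * z ≠ 0 := by
  intro h
  rcases eq_or_ne b 0 with rfl | hb
  · simp_all
  · have hz' : z = algebraMap K L (a / b) := by
      have : algebraMap K L b ≠ 0 := by simpa using hb
      rw [map_div₀, eq_div_iff this]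
      linear_combination -h
    apply hf.not_isRoot_of_natDegree_ne_one hdeg (x := a / b)
    apply (algebraMap K L).injective
    rw [← aeval_algebraMap_apply_eq_algebraMap_eval, ← hz', hz, map_zero]

theorem sq_eq_abs_pow_of_pow_eq {a b : ℝ} {n : ℕ} (hn : 2 ≤ n)
    (h : a ^ (2 * (n - 1)) = b ^ (n * (n - 1))) : a ^ 2 = |b| ^ n := by
  refine (pow_left_inj₀ (sq_nonneg a) (by positivity) (by omega : n - 1 ≠ 0)).mp ?_
  calc (a ^ 2) ^ (n - 1) = |b ^ (n * (n - 1))| := by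
        rw [← pow_mul, ← h, abs_of_nonneg ((even_two_mul _).pow_nonneg a)]
    _ = (|b| ^ n) ^ (n - 1) := by rw [abs_pow, pow_mul]

theorem exists_sq_eq_sq_and_iff {P : ℝ → Prop} {b : ℝ} :
    (∃ μ, μ ^ 2 = b ^ 2 ∧ P μ) ↔ P b ∨ P (-b) := by
  constructor
  · rintro ⟨μ, hμ, hP⟩
    rcases sq_eq_sq_iff_eq_or_eq_neg.mp hμ with rfl | rfl
    exacts [.inl hP, .inr hP]
  · rintro (hP | hP)
    exacts [⟨b, rfl, hP⟩, ⟨-b, neg_sq b, hP⟩]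

theorem abs_pow_eq_sq_sqrt_abs_pow (D : ℝ) (d : ℕ) : |D| ^ d = (√|D| ^ d) ^ 2 := by
  rw [← pow_mul, mul_comm, pow_mul, Real.sq_sqrt (abs_nonneg _)]

def PreservesUpToSign (F : ℝ → ℝ → ℝ) (M : Matrix (Fin 2) (Fin 2) ℝ) : Prop :=
  ∃ ν : ℝ, ν ^ 2 = 1 ∧ ∀ x y, F (M 0 0 * x + M 0 1 * y) (M 1 0 * x + M 1 1 * y) = ν * F x y

section Homogeneous

variable {d : ℕ} {F : ℝ → ℝ → ℝ} (hF : ∀ k x y, F (k * x) (k * y) = k ^ d * F x y)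
include hF

theorem exists_comp_eq_mul_iff_inv_smul {r : ℝ} (hr : r ≠ 0) {a b a' b' : ℝ} :
    (∃ μ, μ ^ 2 = (r ^ d) ^ 2 ∧ ∀ x y, F (a * x + b * y) (a' * x + b' * y) = μ * F x y) ↔
      ∃ ν, ν ^ 2 = 1 ∧ ∀ x y,
        F (r⁻¹ * a * x + r⁻¹ * b * y) (r⁻¹ * a' * x + r⁻¹ * b' * y) = ν * F x y := by
  have hscale : ∀ x y, F (a * x + b * y) (a' * x + b' * y)
      = r ^ d * F (r⁻¹ * a * x + r⁻¹ * b * y) (r⁻¹ * a' * x + r⁻¹ * b' * y) := fun x y => by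
    rw [← hF]; congr 1 <;> field_simp
  have hrd : r ^ d ≠ 0 := pow_ne_zero d hr
  constructor
  · rintro ⟨μ, hμ, h⟩
    refine ⟨μ / r ^ d, by rw [div_pow, hμ, div_self (pow_ne_zero 2 hrd)], fun x y => ?_⟩
    rw [div_mul_eq_mul_div, eq_div_iff hrd, mul_comm, ← hscale, h]
  · rintro ⟨ν, hν, h⟩
    exact ⟨ν * r ^ d, by rw [mul_pow, hν, one_mul], fun x y => by rw [hscale, h]; ring⟩

theorem exists_comp_eq_mul_iff_preservesUpToSign {s t u v : ℤ} (hdet : s * v - t * u ≠ 0) :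
    (∃ μ, μ ^ 2 = |((s * v - t * u : ℤ) : ℝ)| ^ d ∧
        ∀ x y, F (s * x + u * y) (t * x + v * y) = μ * F x y) ↔
      PreservesUpToSign F ((√|((s * v - t * u : ℤ) : ℝ)|)⁻¹ • !![(s : ℝ), u; t, v]) := by
  have hr : √|((s * v - t * u : ℤ) : ℝ)| ≠ 0 := by positivity
  rw [abs_pow_eq_sq_sqrt_abs_pow]
  simpa [PreservesUpToSign] using
    exists_comp_eq_mul_iff_inv_smul hF hr (a := s) (b := u) (a' := t) (b' := v)

theorem smul_mem_autSetF_iff {s t u v : ℤ} (hdet : s * v - t * u ≠ 0) :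
    (√|((s * v - t * u : ℤ) : ℝ)|)⁻¹ • !![(s : ℝ), u; t, v] ∈ autSetF d F ↔
      ∃ μ, μ ^ 2 = |((s * v - t * u : ℤ) : ℝ)| ^ d ∧
        ∀ x y, F (s * x + u * y) (t * x + v * y) = μ * F x y := by
  constructor
  · rintro ⟨s', t', u', v', hdet', hM, hF'⟩
    rw [exists_comp_eq_mul_iff_preservesUpToSign hF hdet, hM,
      ← exists_comp_eq_mul_iff_preservesUpToSign hF hdet', abs_pow_eq_sq_sqrt_abs_pow,
      exists_sq_eq_sq_and_iff]
    simpa only [neg_mul] using hF'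
  · intro h
    rw [abs_pow_eq_sq_sqrt_abs_pow, exists_sq_eq_sq_and_iff] at h
    exact ⟨s, t, u, v, hdet, rfl, by simpa only [neg_mul] using h⟩

end Homogeneous

def evalForm {R : Type*} [CommRing R] (d : ℕ) (c : Fin (d + 1) → ℤ) (x y : R) : R :=
  ∑ i : Fin (d + 1), (c i : R) * x ^ (i : ℕ) * y ^ (d - (i : ℕ))

section EvalForm

variable {R S : Type*} [CommRing R] [CommRing S] {d : ℕ} (c : Fin (d + 1) → ℤ)

theorem map_evalForm (f : R →+* S) (x y : R) :
    f (evalForm d c x y) = evalForm d c (f x) (f y) := by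
  simp [evalForm]

@[simp]
theorem eval_evalForm (p q : R[X]) (x : R) :
    (evalForm d c p q).eval x = evalForm d c (p.eval x) (q.eval x) :=
  map_evalForm c (evalRingHom x) p q

@[simp]
theorem aeval_evalForm [Algebra R S] (p q : R[X]) (z : S) :
    aeval z (evalForm d c p q) = evalForm d c (aeval z p) (aeval z q) :=
  map_evalForm c (aeval z).toRingHom p q

theorem evalForm_mul_mul (k x y : R) :
    evalForm d c (k * x) (k * y) = k ^ d * evalForm d c x y := by
  rw [evalForm, evalForm, mul_sum]
  refine sum_congr rfl fun i _ => ?_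
  rw [mul_pow, mul_pow, ← pow_mul_pow_sub k (Nat.lt_succ_iff.mp i.2)]
  ring

theorem evalForm_zero_right (x : R) : evalForm d c x 0 = c (Fin.last d) * x ^ d := by
  rw [evalForm, Fin.sum_univ_castSucc]
  simp [Nat.sub_ne_zero_of_lt]

theorem evalForm_X_one :
    evalForm d c (X : R[X]) 1 = ∑ i : Fin (d + 1), C (c i : R) * X ^ (i : ℕ) := by
  simp [evalForm]

theorem coeff_evalForm_X_one (n : Fin (d + 1)) : (evalForm d c (X : R[X]) 1).coeff n = c n := by
  simp [evalForm, coeff_X_pow, Fin.val_eq_val]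

theorem natDegree_evalForm_X_one (hc : (c (Fin.last d) : R) ≠ 0) :
    (evalForm d c (X : R[X]) 1).natDegree = d := by
  refine le_antisymm ?_ (le_natDegree_of_ne_zero ?_)
  · rw [evalForm_X_one]
    exact natDegree_le_of_degree_le (Order.le_of_lt_succ (degree_sum_fin_lt _))
  · simpa using (coeff_evalForm_X_one (R := R) c (Fin.last d)).symm ▸ hc

end EvalForm

theorem binForm_eq_evalForm {d : ℕ} (c : Fin (d + 1) → ℤ) : binForm d c = evalForm d c := rfl

theorem ofReal_binForm {d : ℕ} (c : Fin (d + 1) → ℤ) (x y : ℝ) :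
    (binForm d c x y : ℂ) = evalForm d c (x : ℂ) (y : ℂ) :=
  map_evalForm c Complex.ofRealHom x y

theorem evalForm_eq_prod {K : Type*} [Field K] {d : ℕ} {c : Fin (d + 1) → ℤ}
    (hc : (c (Fin.last d) : K) ≠ 0) {α : Fin d → K} (hα : Function.Injective α)
    (hroot : ∀ k, evalForm d c (α k) 1 = 0) (x y : K) :
    evalForm d c x y = c (Fin.last d) * ∏ k, (x - α k * y) := by
  set p := evalForm d c (X : K[X]) 1
  have hdeg : p.natDegree = d := natDegree_evalForm_X_one c hc
  have hp : p ≠ 0 := fun h =>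
    hc (by simpa [p, h] using (coeff_evalForm_X_one (R := K) c (Fin.last d)).symm)
  have hroots : p.roots = univ.val.map α := by
    refine (Multiset.eq_of_le_of_card_le ?_ ?_).symm
    · refine (Multiset.le_iff_subset (Multiset.nodup_map_iff_of_injective hα |>.mpr univ.nodup)).mpr
        fun z hz => ?_
      obtain ⟨k, -, rfl⟩ := Multiset.mem_map.mp hz
      exact (mem_roots hp).mpr (by simp [p, hroot])
    · simpa [hdeg] using card_roots' p
  have hfac : p = C (c (Fin.last d) : K) * ∏ k, (X - C (α k)) := by
    have := C_leadingCoeff_mul_prod_multiset_X_sub_C (p := p) (by simp [hroots, hdeg])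
    rw [← this, hroots, leadingCoeff, hdeg, Multiset.map_map]
    congr 2
    simpa using coeff_evalForm_X_one (R := K) c (Fin.last d)
  rcases eq_or_ne y 0 with rfl | hy
  · simp [evalForm_zero_right]
  · calc evalForm d c x y = y ^ d * p.eval (x / y) := by
          rw [eval_evalForm, eval_X, eval_one, ← evalForm_mul_mul, mul_div_cancel₀ _ hy, mul_one]
      _ = _ := by
          rw [hfac, eval_mul, eval_prod, eval_C, mul_left_comm, ← Fin.prod_const d y,
            ← prod_mul_distrib]
          congr 1
          refine prod_congr rfl fun k _ => ?_
          simp only [eval_sub, eval_X, eval_C]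
          field_simp

theorem evalForm_moebius_eq_algebraMap_mul {K L : Type*} [Field K] [Infinite K] [CommRing L]
    [Algebra K L] {d : ℕ} {c : Fin (d + 1) → ℤ} {s t u v : ℤ} {μ : K}
    (h : ∀ x : K, evalForm d c (s * x + u) (t * x + v) = μ * evalForm d c x 1) (z : L) :
    evalForm d c (s * z + u) (t * z + v) = algebraMap K L μ * evalForm d c z 1 := by
  have hpoly : evalForm d c ((s : K[X]) * X + (u : K[X])) ((t : K[X]) * X + (v : K[X]))
      = C μ * evalForm d c X 1 :=
    Polynomial.funext fun x => by simpa using h x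
  simpa using congrArg (aeval z) hpoly

section Moebius

variable {K : Type*} [Field K] {d : ℕ} {c : Fin (d + 1) → ℤ} {α : Fin d → K}
  (hfac : ∀ x y, evalForm d c x y = c (Fin.last d) * ∏ k, (x - α k * y))
include hfac

theorem evalForm_moebius_eq_prod (s t u v x y : K) :
    evalForm d c (s * x + u * y) (t * x + v * y)
      = c (Fin.last d) * ∏ k, ((s - t * α k) * x + (u - v * α k) * y) := by
  rw [hfac]
  exact congrArg _ (prod_congr rfl fun k _ => by ring)

theorem evalForm_moebius_eq_mul_of_perm {s t u v : K} {π : Equiv.Perm (Fin d)}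
    (hπ : ∀ i, (s - t * α i) * α (π i) + (u - v * α i) = 0) (x y : K) :
    evalForm d c (s * x + u * y) (t * x + v * y) = (∏ i, (s - t * α i)) * evalForm d c x y := by
  have hfactor : ∀ k, (s - t * α k) * x + (u - v * α k) * y = (s - t * α k) * (x - α (π k) * y) :=
    fun k => by linear_combination y * hπ k
  rw [evalForm_moebius_eq_prod hfac, hfac x y, ← Equiv.prod_comp π (fun k => x - α k * y)]
  simp only [hfactor, prod_mul_distrib]
  ring

theorem exists_moebius_root_of_eq_mul (hc : (c (Fin.last d) : K) ≠ 0) {s t u v : K} {μ : K}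
    (hμ : μ ≠ 0) (h : ∀ z, evalForm d c (s * z + u) (t * z + v) = μ * evalForm d c z 1)
    {i : Fin d} (hi : s - t * α i ≠ 0) : ∃ j, (s - t * α i) * α j + (u - v * α i) = 0 := by
  set β := -(u - v * α i) / (s - t * α i)
  have hβ : (s - t * α i) * β + (u - v * α i) = 0 := by
    simp only [β]; field_simp; ring
  have hGβ : evalForm d c (s * β + u) (t * β + v) = 0 := by
    simpa [prod_eq_zero (f := fun k => (s - t * α k) * β + (u - v * α k)) (mem_univ i) hβ]
      using evalForm_moebius_eq_prod hfac s t u v β 1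
  rw [h, hfac, mul_eq_zero, mul_eq_zero, prod_eq_zero_iff] at hGβ
  obtain ⟨j, -, hj⟩ := ((hGβ.resolve_left hμ).resolve_left hc)
  exact ⟨j, by linear_combination hβ - (s - t * α i) * hj⟩

end Moebius

theorem exists_perm_moebius {K : Type*} [Field K] [CharZero K] {d : ℕ} {c : Fin (d + 1) → ℤ}
    {α : Fin d → K} (hfac : ∀ x y, evalForm d c x y = c (Fin.last d) * ∏ k, (x - α k * y))
    (hc : (c (Fin.last d) : K) ≠ 0) (hirr : Irreducible (evalForm d c (X : ℚ[X]) 1))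
    (hα : Function.Injective α) {s t u v : ℤ} (hst : ∀ i, (s : K) - t * α i ≠ 0)
    {i₀ j : Fin d} (hj : ((s : K) - t * α i₀) * α j + (u - v * α i₀) = 0) :
    ∃ π : Equiv.Perm (Fin d), ∀ i, ((s : K) - t * α i) * α (π i) + (u - v * α i) = 0 := by
  set G : ℚ[X] := evalForm d c ((s : ℚ[X]) * X + (u : ℚ[X])) ((t : ℚ[X]) * X + (v : ℚ[X]))
  have hG : ∀ z : K, aeval z G = c (Fin.last d) * ∏ k, ((s - t * α k) * z + (u - v * α k)) :=
    fun z => by simpa [G] using evalForm_moebius_eq_prod hfac (s : K) t u v z 1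
  have hF : ∀ k, aeval (α k) (evalForm d c (X : ℚ[X]) 1) = 0 := fun k => by
    simp [hfac, prod_eq_zero (f := fun m => α k - α m) (mem_univ k)]
  have hdvd : evalForm d c X 1 ∣ G := (hirr.dvd_iff_aeval_eq_zero (hF j)).mp <| by
    rw [hG, prod_eq_zero (mem_univ i₀) hj, mul_zero]
  have hpre : ∀ k, ∃ i, ((s : K) - t * α i) * α k + (u - v * α i) = 0 := fun k => by
    have hk := aeval_eq_zero_of_dvd_aeval_eq_zero hdvd (hF k)
    rw [hG, mul_eq_zero, prod_eq_zero_iff] at hk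
    obtain ⟨i, -, hi⟩ := hk.resolve_left hc
    exact ⟨i, hi⟩
  choose ρ hρ using hpre
  have hρ_inj : Function.Injective ρ := fun k k' h => by
    have hk' := hρ k'
    rw [← h] at hk'
    exact hα <| mul_left_cancel₀ (hst (ρ k)) <| by linear_combination hρ k - hk'
  let e := Equiv.ofBijective ρ hρ_inj.bijective_of_finite
  exact ⟨e.symm, fun i => by simpa [e, Equiv.ofBijective_apply_symm_apply] using hρ (e.symm i)⟩

theorem intCast_sub_mul_ne_zero {K : Type*} [Field K] [CharZero K] {d : ℕ}
    {c : Fin (d + 1) → ℤ} (hd : d ≠ 1) (hcd : c (Fin.last d) ≠ 0)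
    (hirr : Irreducible (evalForm d c (X : ℚ[X]) 1)) {z : K} (hz : evalForm d c z 1 = 0)
    {s t : ℤ} (hst : s ≠ 0 ∨ t ≠ 0) : (s : K) - t * z ≠ 0 := by
  have hdeg : (evalForm d c (X : ℚ[X]) 1).natDegree ≠ 1 := by
    rwa [natDegree_evalForm_X_one c (by exact_mod_cast hcd)]
  have := hirr.algebraMap_sub_mul_ne_zero hdeg (z := z) (by simpa using hz)
    (a := (s : ℚ)) (b := t) (by exact_mod_cast hst)
  rwa [map_intCast, map_intCast] at this

section Complex

variable {d : ℕ} {c : Fin (d + 1) → ℤ} {α : Fin d → ℂ}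
  (hfac : ∀ x y, evalForm d c x y = c (Fin.last d) * ∏ k, (x - α k * y))
  (hc : (c (Fin.last d) : ℂ) ≠ 0) {s t u v : ℤ}
include hfac hc

theorem exists_sq_eq_and_binForm_moebius_eq_mul (hd : 2 ≤ d) (hα : Function.Injective α)
    {π : Equiv.Perm (Fin d)} (hπ : ∀ i, ((s : ℂ) - t * α i) * α (π i) + (u - v * α i) = 0) :
    ∃ μ : ℝ, μ ^ 2 = |((s * v - t * u : ℤ) : ℝ)| ^ d ∧
      ∀ x y, binForm d c (s * x + u * y) (t * x + v * y) = μ * binForm d c x y := by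
  have hmul := evalForm_moebius_eq_mul_of_perm hfac hπ
  set μ : ℝ := binForm d c s t / c (Fin.last d)
  have hμ : (μ : ℂ) = ∏ i, ((s : ℂ) - t * α i) := by
    have h10 := hmul 1 0
    simp only [mul_one, mul_zero, add_zero, evalForm_zero_right, one_pow] at h10
    rw [Complex.ofReal_div, ofReal_binForm, div_eq_iff (by exact_mod_cast hc)]
    exact_mod_cast h10
  refine ⟨μ, sq_eq_abs_pow_of_pow_eq hd ?_, fun x y => Complex.ofReal_injective ?_⟩
  · have hpow := prod_pow_eq_of_moebius_perm hα π hπ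
    rw [← hμ] at hpow
    exact_mod_cast hpow
  · push_cast [ofReal_binForm]
    rw [hmul, hμ]

theorem exists_moebius_root_of_binForm_eq_mul {μ : ℝ} (hμ : μ ≠ 0)
    (h : ∀ x y, binForm d c (s * x + u * y) (t * x + v * y) = μ * binForm d c x y)
    {i : Fin d} (hi : (s : ℂ) - t * α i ≠ 0) :
    ∃ j, ((s : ℂ) - t * α i) * α j + (u - v * α i) = 0 :=
  exists_moebius_root_of_eq_mul hfac hc (Complex.ofReal_ne_zero.mpr hμ)
    (evalForm_moebius_eq_algebraMap_mul fun x => by simpa [binForm_eq_evalForm] using h x 1) hi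

end Complex

/-- let `F` be an irreducible binary form of degree `d ≥ 3` with roots
`α₁, …, α_d` of `F(x,1)` (taken in `ℂ`, an algebraic closure of `ℚ`). For integers
`s,t,u,v` with `sv-tu ≠ 0`, there exists an index `j` with
`α_j = (v·α₁ - u)/(-t·α₁ + s)` if and only if `|sv-tu|^{-1/2}·(s u; t v) ∈ Aut'|F|`. -/
theorem stmt8 (d : ℕ) (hd : 3 ≤ d) (c : Fin (d + 1) → ℤ) (hcd : c (Fin.last d) ≠ 0)
    (hirr : Irreducible (∑ i : Fin (d + 1), Polynomial.C ((c i : ℚ)) * Polynomial.X ^ (i : ℕ)))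
    (α : Fin d → ℂ) (hinj : Function.Injective α)
    (hroot : ∀ i : Fin d, ∑ j : Fin (d + 1), (c j : ℂ) * (α i) ^ (j : ℕ) = 0)
    (s t u v : ℤ) (hdet : s * v - t * u ≠ 0) :
    (∃ j : Fin d, α j * (-(t : ℂ) * α ⟨0, by omega⟩ + (s : ℂ)) =
        (v : ℂ) * α ⟨0, by omega⟩ - (u : ℂ)) ↔
    (Real.sqrt |((s * v - t * u : ℤ) : ℝ)|)⁻¹ •
        !![(s : ℝ), (u : ℝ); (t : ℝ), (v : ℝ)] ∈ autSetF d (binForm d c) := by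
  rw [← evalForm_X_one] at hirr
  have hc : (c (Fin.last d) : ℂ) ≠ 0 := by exact_mod_cast hcd
  have hroot' : ∀ i, evalForm d c (α i) 1 = 0 := fun i => by simpa [evalForm] using hroot i
  have hfac := evalForm_eq_prod hc hinj hroot'
  have hst : ∀ i, (s : ℂ) - t * α i ≠ 0 := fun i =>
    intCast_sub_mul_ne_zero (by omega) hcd hirr (hroot' i) (by contrapose! hdet; simp [hdet])
  have hmoebius : ∀ j, α j * (-(t : ℂ) * α ⟨0, by omega⟩ + s) = v * α ⟨0, by omega⟩ - u ↔
      ((s : ℂ) - t * α ⟨0, by omega⟩) * α j + (u - v * α ⟨0, by omega⟩) = 0 := fun j => by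
    constructor <;> intro h <;> linear_combination h
  simp only [hmoebius]
  rw [smul_mem_autSetF_iff (F := binForm d c) (evalForm_mul_mul c) hdet]
  constructor
  · rintro ⟨j, hj⟩
    obtain ⟨π, hπ⟩ := exists_perm_moebius hfac hc hirr hinj hst hj
    exact exists_sq_eq_and_binForm_moebius_eq_mul hfac hc (by omega) hinj hπ
  · rintro ⟨μ, hμsq, hμ⟩
    have hμ0 : μ ≠ 0 := by
      rintro rfl
      exact pow_ne_zero d (abs_ne_zero.mpr (Int.cast_ne_zero.mpr hdet))
        (hμsq.symm.trans (zero_pow two_ne_zero))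
    exact exists_moebius_root_of_binForm_eq_mul hfac hc hμ0 hμ (hst _)
end
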